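/- arXiv:2310.14721 — 5 statements merged into one kernel-verified Lean document; each statement's English description precedes it below -/
import Mathlib

section
/- Let x ∈ ℝ be fixed with P a polynomial such that f(x) is a simple root of y ↦ P(x,y), and define y_sup = min{y : P(x,y)=0, y > f(x)} (or +∞ if empty) and y_inf = max{y : P(x,y)=0, y < f(x)} (or -∞ if empty). Then the interval (y_inf, y_sup) is nonempty, and for the ODE dy/dt = σ·P(x,y) with σ chosen so that σ·P(x,y) < 0 for y slightly above f(x), every solution with initial value in (y_inf, y_sup) converges to f(x). -/
/-!
Write `g w = σ * p(w)`. Since `r` is a simple root, `p = (X - r) * q` with `q(r) = p'(r) ≠ 0`, so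
`(w - r) * g w = (w - r)^2 * σ * q(w)`. The interval `J` between the neighbouring roots of `p` is
open and connected, `q` has no root in it, and `σ * q < 0` just right of `r`; hence
`(w - r) * g w < 0` on `J \ {r}`: the flow points towards `r` everywhere in `J`.

A solution of `y' = g y` starting in `J` therefore stays between `r` and its initial value
(comparison with the constant barriers at `y s` and at points of `J` arbitrarily close to `r`).
If it stayed at distance `≥ ε` from `r`, then `V = (y - r)^2` would decrease at a rate bounded
away from zero (a compactness bound on `(w - r) * g w`), contradicting `V ≥ 0`.
-/

open Filter Set Polynomial Topology

section AutonomousODE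

variable {g y : ℝ → ℝ}

theorem solution_le_of_neg (hy : ∀ t, HasDerivAt y (g (y t)) t) {z s t : ℝ}
    (hz : g z < 0) (hs : y s ≤ z) (hst : s ≤ t) : y t ≤ z :=
  image_le_of_deriv_right_lt_deriv_boundary (B := fun _ => z) (B' := fun _ => 0)
    (fun u _ => (hy u).continuousAt.continuousWithinAt) (fun u _ => (hy u).hasDerivWithinAt)
    hs (fun _ => hasDerivAt_const _ _) (fun u _ h => by simpa [h] using hz) ⟨hst, le_rfl⟩

theorem le_solution_of_pos (hy : ∀ t, HasDerivAt y (g (y t)) t) {z s t : ℝ}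
    (hz : 0 < g z) (hs : z ≤ y s) (hst : s ≤ t) : z ≤ y t :=
  image_le_of_deriv_right_lt_deriv_boundary (f := fun _ => z) (f' := fun _ => 0)
    continuousOn_const (fun _ _ => hasDerivWithinAt_const _ _ _) hs hy
    (fun u _ h => by simpa [← h] using hz) ⟨hst, le_rfl⟩

theorem solution_le_of_eventually_neg (hy : ∀ t, HasDerivAt y (g (y t)) t) {r s t : ℝ}
    (hg : ∀ᶠ w in 𝓝[>] r, g w < 0) (hs : y s ≤ r) (hst : s ≤ t) : y t ≤ r := by
  by_contra! ht
  obtain ⟨w, hw, hrw, hwt⟩ := (hg.and (Ioo_mem_nhdsGT ht)).exists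
  exact (solution_le_of_neg hy hw (hs.trans hrw.le) hst).not_gt hwt

theorem le_solution_of_eventually_pos (hy : ∀ t, HasDerivAt y (g (y t)) t) {r s t : ℝ}
    (hg : ∀ᶠ w in 𝓝[<] r, 0 < g w) (hs : r ≤ y s) (hst : s ≤ t) : r ≤ y t := by
  by_contra! ht
  obtain ⟨w, hw, htw, hwr⟩ := (hg.and (Ioo_mem_nhdsLT ht)).exists
  exact (le_solution_of_pos hy hw (hwr.le.trans hs) hst).not_gt htw

theorem solution_mem_uIcc (hy : ∀ t, HasDerivAt y (g (y t)) t) {I : Set ℝ} {r : ℝ}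
    (hI : I ∈ 𝓝 r) (hsign : ∀ w ∈ I, w ≠ r → (w - r) * g w < 0) {s t : ℝ} (hs : y s ∈ I)
    (hst : s ≤ t) : y t ∈ uIcc r (y s) := by
  have hpos : ∀ᶠ w in 𝓝[<] r, 0 < g w := by
    filter_upwards [nhdsWithin_le_nhds hI, self_mem_nhdsWithin] with w hwI hwr
    exact pos_of_mul_neg_right (hsign w hwI (ne_of_lt hwr)) (by linarith [mem_Iio.1 hwr])
  have hneg : ∀ᶠ w in 𝓝[>] r, g w < 0 := by
    filter_upwards [nhdsWithin_le_nhds hI, self_mem_nhdsWithin] with w hwI hrw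
    exact neg_of_mul_neg_right (hsign w hwI (ne_of_gt hrw)) (by linarith [mem_Ioi.1 hrw])
  rcases lt_trichotomy (y s) r with h | h | h
  · rw [uIcc_of_ge h.le]
    exact ⟨le_solution_of_pos hy (pos_of_mul_neg_right (hsign _ hs h.ne) (by linarith)) le_rfl hst,
      solution_le_of_eventually_neg hy hneg h.le hst⟩
  · rw [h, uIcc_self, mem_singleton_iff]
    exact le_antisymm (solution_le_of_eventually_neg hy hneg h.le hst)
      (le_solution_of_eventually_pos hy hpos h.ge hst)
  · rw [uIcc_of_le h.le]
    exact ⟨le_solution_of_eventually_pos hy hpos h.le hst,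
      solution_le_of_neg hy (neg_of_mul_neg_right (hsign _ hs h.ne') (by linarith)) le_rfl hst⟩

theorem exists_lt_of_hasDerivAt_le_neg {V V' : ℝ → ℝ} (hV : ∀ t, HasDerivAt V (V' t) t)
    {c : ℝ} (hc : c < 0) (hV' : ∀ t, 0 ≤ t → V' t ≤ c) (a : ℝ) : ∃ T, 0 ≤ T ∧ V T < a := by
  set T := (|V 0 - a| + 1) / -c with hT_def
  have hT : 0 ≤ T := div_nonneg (by positivity) (by linarith)
  refine ⟨T, hT, ?_⟩
  have hlin : V T ≤ V 0 + c * T :=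
    image_le_of_deriv_right_le_deriv_boundary (B := fun t => V 0 + c * t) (B' := fun _ => c)
      (fun u _ => (hV u).continuousAt.continuousWithinAt) (fun u _ => (hV u).hasDerivWithinAt)
      (by simp) (by fun_prop) (fun u _ => ((hasDerivAt_id u).const_mul c |>.const_add _
        |>.congr_deriv (mul_one c)).hasDerivWithinAt) (fun u hu => hV' u hu.1) ⟨hT, le_rfl⟩
  have hcT : c * T = -(|V 0 - a| + 1) := by
    rw [hT_def]; field_simp [hc.ne]
  linarith [le_abs_self (V 0 - a)]

theorem tendsto_of_sub_mul_neg (hg : Continuous g) (hy : ∀ t, HasDerivAt y (g (y t)) t)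
    {I : Set ℝ} {r : ℝ} (hI : I ∈ 𝓝 r) (hIc : I.OrdConnected)
    (hsign : ∀ w ∈ I, w ≠ r → (w - r) * g w < 0) (h0 : y 0 ∈ I) :
    Tendsto y atTop (𝓝 r) := by
  have hmem : ∀ t, 0 ≤ t → y t ∈ uIcc r (y 0) := fun t ht => solution_mem_uIcc hy hI hsign h0 ht
  have hI' : ∀ t, 0 ≤ t → y t ∈ I := fun t ht => hIc.uIcc_subset (mem_of_mem_nhds hI) h0 (hmem t ht)
  rw [Metric.tendsto_atTop]
  intro ε hε
  suffices ∃ T, 0 ≤ T ∧ dist (y T) r < ε by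
    obtain ⟨T, hT0, hT⟩ := this
    refine ⟨T, fun t ht => ?_⟩
    have := abs_sub_left_of_mem_uIcc (solution_mem_uIcc hy hI hsign (hI' T hT0) ht)
    rw [Real.dist_eq] at hT ⊢
    linarith
  by_contra! hfar
  set K := uIcc r (y 0) ∩ {w | ε ≤ dist w r}
  have hK : IsCompact K :=
    isCompact_uIcc.inter_right (isClosed_le continuous_const (continuous_id.dist continuous_const))
  have hyK : ∀ t, 0 ≤ t → y t ∈ K := fun t ht => ⟨hmem t ht, hfar t ht⟩
  obtain ⟨w₀, hw₀K, hw₀max⟩ :=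
    hK.exists_isMaxOn ⟨y 0, hyK 0 le_rfl⟩
      (by fun_prop : Continuous fun w => (w - r) * g w).continuousOn
  have hw₀ : (w₀ - r) * g w₀ < 0 :=
    hsign w₀ (hIc.uIcc_subset (mem_of_mem_nhds hI) h0 hw₀K.1)
      (dist_pos.1 (hε.trans_le hw₀K.2))
  have hV : ∀ t, HasDerivAt (fun t => (y t - r) ^ 2) (2 * ((y t - r) * g (y t))) t := fun t =>
    ((hy t).sub_const r).pow 2 |>.congr_deriv (by ring)
  obtain ⟨T, -, hT⟩ := exists_lt_of_hasDerivAt_le_neg hV (by linarith : 2 * ((w₀ - r) * g w₀) < 0)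
    (fun t ht => by linarith [isMaxOn_iff.1 hw₀max _ (hyK t ht)]) 0
  exact (sq_nonneg _).not_gt hT

end AutonomousODE

def rootInterval (p : ℝ[X]) (r : ℝ) : Set ℝ :=
  {y | (∀ z, p.eval z = 0 → r < z → y < z) ∧ (∀ z, p.eval z = 0 → z < r → z < y)}

section RootInterval

variable {p : ℝ[X]} {r : ℝ}

theorem mem_rootInterval_self : r ∈ rootInterval p r :=
  ⟨fun _ _ h => h, fun _ _ h => h⟩

theorem ordConnected_rootInterval : (rootInterval p r).OrdConnected :=
  ⟨fun _ ha _ hb _ hw => ⟨fun z hz hrz => hw.2.trans_lt (hb.1 z hz hrz),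
    fun z hz hzr => (ha.2 z hz hzr).trans_le hw.1⟩⟩

theorem rootInterval_mem_nhds (hp : p ≠ 0) : rootInterval p r ∈ 𝓝 r := by
  have hroots : ∀ᶠ w in 𝓝 r, ∀ z ∈ {z | p.eval z = 0}, (r < z → w < z) ∧ (z < r → z < w) :=
    (eventually_all_finite (p.finite_setOfPred_isRoot hp)).2 fun _ _ =>
      (eventually_imp_distrib_left.2 eventually_lt_nhds).and
        (eventually_imp_distrib_left.2 eventually_gt_nhds)
  exact hroots.mono fun w hw => ⟨fun z hz => (hw z hz).1, fun z hz => (hw z hz).2⟩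

theorem eq_of_mem_rootInterval {w : ℝ} (hw : w ∈ rootInterval p r) (hpw : p.eval w = 0) :
    w = r := by
  rcases lt_trichotomy w r with h | h | h
  · exact absurd (hw.2 w hpw h) (lt_irrefl w)
  · exact h
  · exact absurd (hw.1 w hpw h) (lt_irrefl w)

theorem sub_mul_neg_of_mem_rootInterval (hroot : p.eval r = 0)
    (hsimple : p.derivative.eval r ≠ 0) {σ : ℝ}
    (hσ : ∃ δ > 0, ∀ y ∈ Ioo r (r + δ), σ * p.eval y < 0) :
    ∀ w ∈ rootInterval p r, w ≠ r → (w - r) * (σ * p.eval w) < 0 := by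
  have hp : p ≠ 0 := by rintro rfl; simp at hsimple
  set q := p /ₘ (X - C r)
  have hpq : p = (X - C r) * q := (mul_divByMonic_eq_iff_isRoot.2 hroot).symm
  have hq : q.eval r ≠ 0 := by
    rw [hpq] at hsimple
    simpa using hsimple
  have hfactor : ∀ w, σ * p.eval w = (w - r) * (σ * q.eval w) := fun w => by
    rw [hpq]; simp only [eval_mul, eval_sub, eval_X, eval_C]; ring
  suffices hσq : ∀ w ∈ rootInterval p r, σ * q.eval w < 0 by
    intro w hw hwr
    rw [hfactor, ← mul_assoc]
    exact mul_neg_of_pos_of_neg (mul_self_pos.2 (sub_ne_zero.2 hwr)) (hσq w hw)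
  obtain ⟨δ, hδ, hneg⟩ := hσ
  obtain ⟨v, hvJ, hv⟩ :=
    Filter.nonempty_of_mem (inter_mem (mem_nhdsWithin_of_mem_nhds (rootInterval_mem_nhds hp))
      (Ioo_mem_nhdsGT (by linarith : r < r + δ)))
  have hqv : σ * q.eval v < 0 := by
    have := hneg v hv
    rw [hfactor] at this
    exact neg_of_mul_neg_right this (by linarith [hv.1])
  have hσ0 : σ ≠ 0 := left_ne_zero_of_mul hqv.ne
  by_contra! hw
  obtain ⟨w, hwJ, hqw⟩ := hw
  obtain ⟨u, huJ, hqu⟩ := ordConnected_rootInterval.isPreconnected.intermediate_value hvJ hwJ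
    (by fun_prop : Continuous fun w => σ * q.eval w).continuousOn ⟨hqv.le, hqw⟩
  have hqu' : q.eval u = 0 := (mul_eq_zero.1 hqu).resolve_left hσ0
  have hur : u = r := eq_of_mem_rootInterval huJ (by rw [hpq, eval_mul, hqu', mul_zero])
  exact hq (hur ▸ hqu')

end RootInterval

theorem stmt_4 (p : Polynomial ℝ) (r : ℝ)
    (hroot : p.eval r = 0) (hsimple : p.derivative.eval r ≠ 0)
    (σ : ℝ)
    (hσ : ∃ δ > 0, ∀ y ∈ Set.Ioo r (r + δ), σ * p.eval y < 0)
    (J : Set ℝ)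
    (hJ : J = {y | (∀ z, p.eval z = 0 → r < z → y < z) ∧
                   (∀ z, p.eval z = 0 → z < r → z < y)}) :
    r ∈ J ∧ J ∈ nhds r ∧
    ∀ y : ℝ → ℝ, (∀ t, HasDerivAt y (σ * p.eval (y t)) t) →
      y 0 ∈ J → Tendsto y atTop (nhds r) := by
  have hp : p ≠ 0 := by rintro rfl; simp at hsimple
  subst hJ
  refine ⟨mem_rootInterval_self, rootInterval_mem_nhds hp, fun y hy hy0 => ?_⟩
  exact tendsto_of_sub_mul_neg (g := fun w => σ * p.eval w) (by fun_prop) hy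
    (rootInterval_mem_nhds hp) ordConnected_rootInterval
    (sub_mul_neg_of_mem_rootInterval hroot hsimple hσ) hy0
end

section
/- The PODE dy/dt = −z₁(x−z₂), dz₁/dt = y(x−z₂), dz₂/dt = x−z₂ with constant x and initial conditions y(0)=1, z₁(0)=0, z₂(0)=0 has the explicit solution y(t) = cos(z₂(t)), z₁(t) = sin(z₂(t)), z₂(t) = x(1−e^{−t}); in particular y(t) → cos(x) as t → ∞. -/
/-!
The equation for `z₂` is linear, so `(z₂ t - x) eᵗ` has zero derivative and
`z₂ t = x (1 - e⁻ᵗ)`. The pair `(y, z₁)` then rotates with angular velocity `z₂'`, so the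
squared distance from `(y, z₁)` to `(cos z₂, sin z₂)` has zero derivative; it vanishes at `t = 0`,
hence everywhere. The limit follows from `z₂ t → x` and continuity of `cos`.
-/

open Filter Real

theorem eq_add_mul_exp_neg_of_hasDerivAt {z : ℝ → ℝ} {a : ℝ}
    (hz : ∀ t, HasDerivAt z (a - z t) t) (t : ℝ) :
    z t = a + (z 0 - a) * exp (-t) := by
  have hderiv : ∀ s, HasDerivAt (fun s => (z s - a) * exp s) 0 s := fun s =>
    (((hz s).sub_const a).mul (hasDerivAt_exp s)).congr_deriv (by ring)
  have hconst := is_const_of_deriv_eq_zero (fun s => (hderiv s).differentiableAt)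
    (fun s => (hderiv s).deriv) t 0
  simp only [exp_zero, mul_one] at hconst
  rw [← hconst, mul_assoc, ← exp_add, add_neg_cancel, exp_zero]
  ring

theorem eq_cos_and_eq_sin_of_hasDerivAt {y z θ ω : ℝ → ℝ}
    (hy : ∀ t, HasDerivAt y (-z t * ω t) t) (hz : ∀ t, HasDerivAt z (y t * ω t) t)
    (hθ : ∀ t, HasDerivAt θ (ω t) t) (hy0 : y 0 = cos (θ 0)) (hz0 : z 0 = sin (θ 0))
    (t : ℝ) : y t = cos (θ t) ∧ z t = sin (θ t) := by
  set E : ℝ → ℝ := fun t => (y t - cos (θ t)) ^ 2 + (z t - sin (θ t)) ^ 2 with hE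
  have hderiv : ∀ s, HasDerivAt E 0 s := fun s =>
    ((((hy s).sub ((hasDerivAt_cos (θ s)).comp s (hθ s))).pow 2).add
      (((hz s).sub ((hasDerivAt_sin (θ s)).comp s (hθ s))).pow 2)).congr_deriv (by
        simp only [Pi.sub_apply, Function.comp_apply]; ring)
  have hEt : E t = 0 := by
    rw [is_const_of_deriv_eq_zero (fun s => (hderiv s).differentiableAt)
      (fun s => (hderiv s).deriv) t 0, hE]
    simp [hy0, hz0]
  constructor <;> nlinarith [sq_nonneg (y t - cos (θ t)), sq_nonneg (z t - sin (θ t))]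

theorem stmt_9 (x : ℝ) (y z₁ z₂ : ℝ → ℝ)
    (hy : ∀ t, HasDerivAt y (-(z₁ t) * (x - z₂ t)) t)
    (hz₁ : ∀ t, HasDerivAt z₁ (y t * (x - z₂ t)) t)
    (hz₂ : ∀ t, HasDerivAt z₂ (x - z₂ t) t)
    (hy0 : y 0 = 1) (hz₁0 : z₁ 0 = 0) (hz₂0 : z₂ 0 = 0) :
    (∀ t, y t = Real.cos (z₂ t) ∧ z₁ t = Real.sin (z₂ t) ∧
      z₂ t = x * (1 - Real.exp (-t))) ∧
    Tendsto y atTop (nhds (Real.cos x)) := by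
  have hz₂_eq (t : ℝ) : z₂ t = x * (1 - exp (-t)) := by
    rw [eq_add_mul_exp_neg_of_hasDerivAt hz₂ t, hz₂0]; ring
  have hcos_sin := eq_cos_and_eq_sin_of_hasDerivAt hy hz₁ hz₂
    (by rw [hy0, hz₂0, cos_zero]) (by rw [hz₁0, hz₂0, sin_zero])
  refine ⟨fun t => ⟨(hcos_sin t).1, (hcos_sin t).2, hz₂_eq t⟩, ?_⟩
  have hz₂_lim : Tendsto z₂ atTop (nhds x) := by
    rw [funext hz₂_eq]
    simpa using (tendsto_exp_neg_atTop_nhds_zero.const_sub 1).const_mul x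
  rw [show y = cos ∘ z₂ from funext fun t => (hcos_sin t).1]
  exact (continuous_cos.tendsto x).comp hz₂_lim
end

section
/- Let f be differentiable with algebraic relation P(x, f(x)) = 0, let y satisfy dy/dt = ±α·P(x(t), y) with x(t) differentiable, and define ε(t) = y(t) − f(x(t)) and Q by ±P(x, f(x)+ε) = −ε·Q(x, ε). Then dε/dt = −ε·α·Q(x(t), ε) − f'(x(t))·x'(t). In particular if |x'(t)| ≤ k then −ε·α·Q(x,ε) − k·|f'(x)| ≤ dε/dt ≤ −ε·α·Q(x,ε) + k·|f'(x)|. -/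
theorem hasDerivAt_sub_comp {y f x : ℝ → ℝ} {y' t : ℝ}
    (hy : HasDerivAt y y' t) (hf : DifferentiableAt ℝ f (x t)) (hx : DifferentiableAt ℝ x t) :
    HasDerivAt (fun s => y s - f (x s)) (y' - deriv f (x t) * deriv x t) t :=
  hy.sub (hf.hasDerivAt.comp t hx.hasDerivAt)

theorem mul_rate_eq_of_factorization {P Q : ℝ → ℝ → ℝ} {f : ℝ → ℝ} {σ : ℝ}
    (hQ : ∀ u e, σ * P u (f u + e) = -(e * Q u e)) (α u e : ℝ) :
    σ * α * P u (f u + e) = -e * α * Q u e := by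
  linear_combination α * hQ u e

theorem neg_abs_le_mul_and_mul_le_abs {c d k : ℝ} (hc : |c| ≤ k) :
    -(k * |d|) ≤ d * c ∧ d * c ≤ k * |d| :=
  abs_le.mp <| by
    rw [abs_mul, mul_comm]
    exact mul_le_mul_of_nonneg_right hc (abs_nonneg d)

theorem stmt_14_general (P Q : ℝ → ℝ → ℝ) (f x y : ℝ → ℝ) (α σ k : ℝ)
    (hf : Differentiable ℝ f) (hx : Differentiable ℝ x)
    (hQ : ∀ u ε, σ * P u (f u + ε) = -(ε * Q u ε))
    (hy : ∀ t, HasDerivAt y (σ * α * P (x t) (y t)) t)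
    (ε : ℝ → ℝ) (hε : ε = fun t => y t - f (x t)) (t : ℝ) :
    HasDerivAt ε (-(ε t) * α * Q (x t) (ε t) - deriv f (x t) * deriv x t) t ∧
    (|deriv x t| ≤ k →
      -(ε t) * α * Q (x t) (ε t) - k * |deriv f (x t)| ≤
        -(ε t) * α * Q (x t) (ε t) - deriv f (x t) * deriv x t ∧
      -(ε t) * α * Q (x t) (ε t) - deriv f (x t) * deriv x t ≤
        -(ε t) * α * Q (x t) (ε t) + k * |deriv f (x t)|) := by
  subst hε
  refine ⟨?_, fun hk => ?_⟩
  · have hrate : σ * α * P (x t) (y t) = -(y t - f (x t)) * α * Q (x t) (y t - f (x t)) := by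
      simpa using mul_rate_eq_of_factorization hQ α (x t) (y t - f (x t))
    simpa only [hrate] using hasDerivAt_sub_comp (hy t) (hf (x t)) (hx t)
  · obtain ⟨hlower, hupper⟩ := neg_abs_le_mul_and_mul_le_abs (d := deriv f (x t)) hk
    constructor <;> linarith

theorem stmt_14 (P Q : ℝ → ℝ → ℝ) (f x y : ℝ → ℝ) (α σ k : ℝ)
    (hσ : σ = 1 ∨ σ = -1)
    (hf : Differentiable ℝ f) (hx : Differentiable ℝ x)
    (hrel : ∀ u, P u (f u) = 0)
    (hQ : ∀ u ε, σ * P u (f u + ε) = -(ε * Q u ε))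
    (hy : ∀ t, HasDerivAt y (σ * α * P (x t) (y t)) t)
    (ε : ℝ → ℝ) (hε : ε = fun t => y t - f (x t)) (t : ℝ) :
    HasDerivAt ε (-(ε t) * α * Q (x t) (ε t) - deriv f (x t) * deriv x t) t ∧
    (|deriv x t| ≤ k →
      -(ε t) * α * Q (x t) (ε t) - k * |deriv f (x t)| ≤
        -(ε t) * α * Q (x t) (ε t) - deriv f (x t) * deriv x t ∧
      -(ε t) * α * Q (x t) (ε t) - deriv f (x t) * deriv x t ≤
        -(ε t) * α * Q (x t) (ε t) + k * |deriv f (x t)|) :=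
  stmt_14_general P Q f x y α σ k hf hx hQ hy ε hε t
end

section
/- Suppose ε : ℝ → ℝ is differentiable and satisfies, for all t, the implication (ε(t) = p ⇒ ε'(t) < 0) and (ε(t) = −p ⇒ ε'(t) > 0) for some p > 0. If |ε(t₁)| ≤ p then |ε(t)| ≤ p for all t ≥ t₁. -/
/-!
Each of the two barriers `ε = p` and `ε = -p` is handled by Mathlib's fencing theorem
`image_le_of_deriv_right_lt_deriv_boundary` with the constant bound `B = p`: wherever `ε` touches
the bound, its derivative is strictly below that of the bound, so `ε` can never cross it.
The lower barrier is the upper one for `-ε`.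
-/

open Set

theorem le_of_deriv_neg_at_barrier {f : ℝ → ℝ} (hf : Differentiable ℝ f) {p t₁ : ℝ}
    (hbarrier : ∀ t, f t = p → deriv f t < 0) (h₁ : f t₁ ≤ p) :
    ∀ t ≥ t₁, f t ≤ p := fun t ht =>
  image_le_of_deriv_right_lt_deriv_boundary (a := t₁) (b := t) (B' := fun _ => 0)
    hf.continuous.continuousOn (fun x _ => (hf x).hasDerivAt.hasDerivWithinAt) h₁
    (fun _ => hasDerivAt_const _ p) (fun x _ => hbarrier x) ⟨ht, le_rfl⟩

theorem neg_le_of_deriv_pos_at_barrier {f : ℝ → ℝ} (hf : Differentiable ℝ f) {p t₁ : ℝ}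
    (hbarrier : ∀ t, f t = -p → 0 < deriv f t) (h₁ : -p ≤ f t₁) :
    ∀ t ≥ t₁, -p ≤ f t := by
  have hneg : ∀ t, -f t = p → deriv (fun s => -f s) t < 0 := fun t ht => by
    rw [deriv.fun_neg, neg_lt_zero]
    exact hbarrier t (by linarith)
  intro t ht
  exact neg_le.mp (le_of_deriv_neg_at_barrier hf.neg hneg (neg_le.mp h₁) t ht)

theorem stmt_15_general (ε : ℝ → ℝ) (hd : Differentiable ℝ ε) (p : ℝ)
    (hup : ∀ t, ε t = p → deriv ε t < 0)
    (hdown : ∀ t, ε t = -p → deriv ε t > 0)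
    (t₁ : ℝ) (h1 : |ε t₁| ≤ p) :
    ∀ t ≥ t₁, |ε t| ≤ p := by
  intro t ht
  obtain ⟨hlow, hhigh⟩ := abs_le.mp h1
  exact abs_le.mpr ⟨neg_le_of_deriv_pos_at_barrier hd hdown hlow t ht,
    le_of_deriv_neg_at_barrier hd hup hhigh t ht⟩

theorem stmt_15 (ε : ℝ → ℝ) (hd : Differentiable ℝ ε) (p : ℝ) (hp : 0 < p)
    (hup : ∀ t, ε t = p → deriv ε t < 0)
    (hdown : ∀ t, ε t = -p → deriv ε t > 0)
    (t₁ : ℝ) (h1 : |ε t₁| ≤ p) :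
    ∀ t ≥ t₁, |ε t| ≤ p :=
  stmt_15_general ε hd p hup hdown t₁ h1
end

section
/- For the Hill function f(x) = x/(1+x) stabilized directly by dy/dt = α(x(t) − y − x(t)·y) with x k-Lipschitz, differentiable and nonnegative, the error ε = y − f(x) satisfies: whenever ε(t)·dε/dt ≥ 0, |ε(t)| ≤ (k/α)·1/(1+x(t))³. -/
/-!
Along the flow, `ε = y - x/(1+x)` obeys the linear damped equation
`ε' = -α(1+x) ε - x'/(1+x)²`, whose forcing is at most `k/(1+x)²` in absolute value.
Where `ε ε' ≥ 0` the damping cannot beat the forcing, so `α(1+x)|ε| ≤ k/(1+x)²`.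
-/

/-- Here `-c * e + g` stands for `e'` in a damped equation, so the hypothesis says `|e|` is
not decreasing. -/
theorem abs_le_div_of_mul_damped_nonneg {c g M e : ℝ} (hc : 0 < c) (hg : |g| ≤ M)
    (h : 0 ≤ e * (-c * e + g)) : |e| ≤ M / c := by
  rw [le_div_iff₀ hc]
  have hdamp : c * |e| ^ 2 ≤ M * |e| := by
    calc c * |e| ^ 2 = c * e ^ 2 := by rw [sq_abs]
      _ ≤ e * g := by linarith
      _ ≤ |e| * |g| := by rw [← abs_mul]; exact le_abs_self _
      _ ≤ M * |e| := by rw [mul_comm]; gcongr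
  rcases (abs_nonneg e).eq_or_lt with he | he
  · rw [← he]; linarith [abs_nonneg g]
  · nlinarith

theorem HasDerivAt.hill_error {α : ℝ} {x y : ℝ → ℝ} {t x' : ℝ} (hx : HasDerivAt x x' t)
    (hy : HasDerivAt y (α * (x t - y t - x t * y t)) t) (hxt : 1 + x t ≠ 0) :
    HasDerivAt (fun s => y s - x s / (1 + x s))
      (-(α * (1 + x t)) * (y t - x t / (1 + x t)) + -x' / (1 + x t) ^ 2) t := by
  have hquot : HasDerivAt (fun s => x s / (1 + x s))
      ((x' * (1 + x t) - x t * (0 + x')) / (1 + x t) ^ 2) t :=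
    hx.div ((hasDerivAt_const t 1).add hx) hxt
  exact (hy.sub hquot).congr_deriv (by field_simp; ring)

theorem stmt_18 (α k : ℝ) (hα : 0 < α) (hk : 0 ≤ k) (x y : ℝ → ℝ)
    (hlip : ∀ s t, |x s - x t| ≤ k * |s - t|)
    (hxd : Differentiable ℝ x)
    (hxpos : ∀ t, 0 ≤ x t)
    (hy : ∀ t, HasDerivAt y (α * (x t - y t - x t * y t)) t)
    (ε : ℝ → ℝ) (hε : ε = fun t => y t - x t / (1 + x t)) :
    ∀ t, ε t * deriv ε t ≥ 0 →
      |ε t| ≤ k / α * (1 / (1 + x t) ^ 3) := by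
  intro t hmoving
  have hpos : 0 < 1 + x t := by linarith [hxpos t]
  have hx'k : |deriv x t| ≤ k := by
    simpa only [Real.norm_eq_abs] using norm_deriv_le_of_lip' (f := x) hk
      (Filter.Eventually.of_forall fun s => by simpa only [Real.norm_eq_abs] using hlip s t)
  have hforcing : |-deriv x t / (1 + x t) ^ 2| ≤ k / (1 + x t) ^ 2 := by
    rw [abs_div, abs_neg, abs_of_pos (pow_pos hpos 2)]
    gcongr
  subst hε
  rw [((hxd t).hasDerivAt.hill_error (hy t) hpos.ne').deriv] at hmoving
  calc _ ≤ k / (1 + x t) ^ 2 / (α * (1 + x t)) :=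
        abs_le_div_of_mul_damped_nonneg (by positivity) hforcing hmoving
    _ = k / α * (1 / (1 + x t) ^ 3) := by field_simp
end
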